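/- Suppose a : ℝ^d → ℝ^n and c : ℝ^d → ℝ satisfy: sup_x ‖f(x) - a(x)‖₂ ≤ ε₁ for a target f bounded by ‖f‖ ≤ M, and sup_x |1 - c(x)| ≤ ε₂ with ε₂ < 1. Then sup_x ‖f(x) - a(x)/c(x)‖₂ ≤ (ε₁ + ε₂·(M + ε₁)) / (1 - ε₂). -/

import Mathlib

/-- Quantitative bound for replacing an unnormalized approximation `a` of `f` by its
normalized version `a / c`, where `c` is uniformly close to 1. -/
theorem normalized_approx_bound {d n : ℕ}
    (f a : (Fin d → ℝ) → EuclideanSpace ℝ (Fin n)) (c : (Fin d → ℝ) → ℝ)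
    (ε₁ ε₂ M : ℝ) (hε₂ : ε₂ < 1)
    (hfa : ∀ x, ‖f x - a x‖ ≤ ε₁)
    (hfM : ∀ x, ‖f x‖ ≤ M)
    (hc : ∀ x, |1 - c x| ≤ ε₂) :
    ∀ x, ‖f x - (c x)⁻¹ • a x‖ ≤ (ε₁ + ε₂ * (M + ε₁)) / (1 - ε₂) := by
  intro x
  have hε₂0 : 0 ≤ ε₂ := le_trans (abs_nonneg _) (hc x)
  have hcx : 1 - ε₂ ≤ c x := by
    have := (abs_le.mp (hc x)).2
    linarith
  have hcpos : 0 < c x := lt_of_lt_of_le (by linarith) hcx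
  have hkey : f x - (c x)⁻¹ • a x = (c x)⁻¹ • ((c x - 1) • f x + (f x - a x)) := by
    match_scalars <;> field_simp <;> ring
  rw [hkey, norm_smul, norm_inv, Real.norm_eq_abs, abs_of_pos hcpos]
  have hnum : ‖(c x - 1) • f x + (f x - a x)‖ ≤ ε₂ * M + ε₁ := by
    calc ‖(c x - 1) • f x + (f x - a x)‖ ≤ ‖(c x - 1) • f x‖ + ‖f x - a x‖ :=
          norm_add_le _ _
      _ ≤ ε₂ * M + ε₁ := by
          rw [norm_smul, Real.norm_eq_abs]
          have h1 : |c x - 1| ≤ ε₂ := by rw [abs_sub_comm]; exact hc x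
          have hM0 : 0 ≤ M := le_trans (norm_nonneg _) (hfM x)
          exact add_le_add (mul_le_mul h1 (hfM x) (norm_nonneg _) hε₂0) (hfa x)
  have hε₁0 : 0 ≤ ε₁ := le_trans (norm_nonneg _) (hfa x)
  calc (c x)⁻¹ * ‖(c x - 1) • f x + (f x - a x)‖
      ≤ (1 - ε₂)⁻¹ * (ε₂ * M + ε₁) := by
        have h1ε : (0:ℝ) < 1 - ε₂ := by linarith
        have hM0 : 0 ≤ M := le_trans (norm_nonneg _) (hfM x)
        apply mul_le_mul _ hnum (norm_nonneg _) (le_of_lt (inv_pos.mpr h1ε))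
        exact inv_anti₀ h1ε hcx
    _ ≤ (ε₁ + ε₂ * (M + ε₁)) / (1 - ε₂) := by
        rw [div_eq_inv_mul]
        have h1ε : (0:ℝ) < 1 - ε₂ := by linarith
        apply mul_le_mul_of_nonneg_left _ (le_of_lt (inv_pos.mpr h1ε))
        nlinarith
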